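/- Single-step security (non-interference for one step): if command c is well-typed (Γ ⊢ c : ℓ prog), states σ₁ and σ₂ are low-equivalent (Γ ⊢ σ₁ ≈_l σ₂) with dom(Γ) = dom(σ₁) = dom(σ₂), and ⟨c, σ₁⟩ steps to ⟨c₁', σ₁'⟩ taking time t(σ₁) while ⟨c, σ₂⟩ steps to ⟨c₂', σ₂'⟩ taking time t(σ₂), then Γ ⊢ σ₁' ≈_l σ₂' and t(σ₁) = t(σ₂). -/

import Mathlib

/-- Values: plaintext bitstrings `b` or ciphertext-marked bitstrings `[b]`. -/
inductive Val where
  | plain : List Bool → Val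
  | cipher : List Bool → Val

/-- Equivalence of values: all ciphertexts are equivalent; plaintexts iff equal. -/
def Val.equiv : Val → Val → Prop
  | .plain b, .plain b' => b = b'
  | .cipher _, .cipher _ => True
  | _, _ => False

/-- Security labels. -/
inductive Label where
  | public' | priv
deriving DecidableEq

def Label.le : Label → Label → Prop
  | .priv, .public' => False
  | _, _ => True

instance : LE Label := ⟨Label.le⟩

def Label.join : Label → Label → Label
  | .public', .public' => .public'
  | _, _ => .priv

/-- Commands of the SE language. -/
inductive Cmd (Reg : Type) where
  | skip
  | enc (r : Reg)
  | bop (r₁ r₂ : Reg)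
  | cmov (r₁ r₂ r₃ r₄ : Reg)

/-- Programs: a command or a right-associated sequence. -/
inductive Prog (Reg : Type) where
  | single (c : Cmd Reg)
  | seq (c : Cmd Reg) (p : Prog Reg)

/-- States map registers to values. -/
abbrev St (Reg : Type) := Reg → Val

def updSt {Reg : Type} [DecidableEq Reg] (σ : St Reg) (r : Reg) (v : Val) : St Reg :=
  fun r' => if r' = r then v else σ r'

/-- Small-step semantics.  Fresh encryption randomness is modeled by letting the
resulting ciphertext value be an arbitrary (nondeterministic) ciphertext. -/
inductive Step {Reg : Type} [DecidableEq Reg] (keyReg : Reg) :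
    Prog Reg → St Reg → Prog Reg → St Reg → Prop where
  | enc {σ : St Reg} {r b k c} :
      σ r = .plain b → σ keyReg = .plain k →
      Step keyReg (.single (.enc r)) σ (.single .skip) (updSt σ r (.cipher c))
  | bop {σ : St Reg} {r₁ r₂ c₁ c₂ k c₃} :
      σ r₁ = .cipher c₁ → σ r₂ = .cipher c₂ → σ keyReg = .plain k →
      Step keyReg (.single (.bop r₁ r₂)) σ (.single .skip) (updSt σ r₁ (.cipher c₃))
  | cmov {σ : St Reg} {r₁ r₂ r₃ r₄ c₁ c₃ c₄ k c₅} :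
      σ r₁ = .cipher c₁ → σ r₃ = .cipher c₃ → σ r₄ = .cipher c₄ → σ keyReg = .plain k →
      Step keyReg (.single (.cmov r₁ r₂ r₃ r₄)) σ (.single .skip) (updSt σ r₂ (.cipher c₅))
  | seqSkip {σ : St Reg} {p} :
      Step keyReg (.seq .skip p) σ p σ
  | seqStep {σ σ' : St Reg} {c p} :
      Step keyReg (.single c) σ (.single .skip) σ' →
      Step keyReg (.seq c p) σ (.seq .skip p) σ'

/-- Multi-step relation accumulating per-step time `t`.  Taking `t = fun _ => 1`
counts the number of transitions. -/
inductive Steps {Reg : Type} [DecidableEq Reg] (keyReg : Reg) (t : St Reg → ℕ) :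
    Prog Reg → St Reg → ℕ → Prog Reg → St Reg → Prop where
  | refl {p : Prog Reg} {σ} : Steps keyReg t p σ 0 p σ
  | tail {p σ p' σ' n p'' σ''} :
      Step keyReg p σ p' σ' → Steps keyReg t p' σ' n p'' σ'' →
      Steps keyReg t p σ (t σ + n) p'' σ''

/-- The SE security type system. -/
inductive HasType {Reg : Type} (Γ : Reg → Label) : Prog Reg → Label → Prop where
  | skip : HasType Γ (.single .skip) .public'
  | enc {r} : Γ r = .public' → HasType Γ (.single (.enc r)) .public'
  | bop {r₁ r₂} : Γ r₁ = .public' → Γ r₂ = .public' →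
      HasType Γ (.single (.bop r₁ r₂)) .public'
  | cmov {r₁ r₂ r₃ r₄} : Γ r₁ = .public' → Γ r₂ = .public' → Γ r₃ = .public' → Γ r₄ = .public' →
      HasType Γ (.single (.cmov r₁ r₂ r₃ r₄)) .public'
  | seq {c p ℓ' ℓ''} : HasType Γ (.single c) ℓ' → HasType Γ p ℓ'' →
      HasType Γ (.seq c p) (Label.join ℓ' ℓ'')

/-- Low-equivalence of states. -/
def lowEquiv {Reg : Type} (Γ : Reg → Label) (l : Label) (σ₁ σ₂ : St Reg) : Prop :=
  ∀ r, Γ r ≤ l → Val.equiv (σ₁ r) (σ₂ r)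


/-! A step of a single command only ever overwrites its target register with a ciphertext,
and any two ciphertexts are equivalent; so low-equivalence survives the step, and the step
times agree because `t` respects low-equivalence. -/

def Cmd.target {Reg : Type} : Cmd Reg → Option Reg
  | .skip => none
  | .enc r => some r
  | .bop r₁ _ => some r₁
  | .cmov _ r₂ _ _ => some r₂

theorem Step.single_eq_updSt_cipher {Reg : Type} [DecidableEq Reg] {keyReg : Reg}
    {c : Cmd Reg} {σ σ' : St Reg} {p : Prog Reg}
    (h : Step keyReg (.single c) σ p σ') :
    ∃ r ∈ c.target, ∃ b, σ' = updSt σ r (.cipher b) := by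
  cases h <;> exact ⟨_, rfl, _, rfl⟩

theorem lowEquiv.updSt_cipher {Reg : Type} [DecidableEq Reg] {Γ : Reg → Label} {l : Label}
    {σ₁ σ₂ : St Reg} (h : lowEquiv Γ l σ₁ σ₂) (r : Reg) (b₁ b₂ : List Bool) :
    lowEquiv Γ l (updSt σ₁ r (.cipher b₁)) (updSt σ₂ r (.cipher b₂)) := by
  intro r' hr'
  by_cases hr : r' = r
  · simp only [updSt, hr, if_true, Val.equiv]
  · simpa only [updSt, hr, if_false] using h r' hr'

theorem single_step_security_general {Reg : Type} [DecidableEq Reg] (keyReg : Reg)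
    (Γ : Reg → Label) (l : Label) (t : St Reg → ℕ)
    (ht : ∀ σ σ', lowEquiv Γ l σ σ' → t σ = t σ')
    (c : Cmd Reg) (σ₁ σ₂ σ₁' σ₂' : St Reg) (c₁' c₂' : Prog Reg)
    (h2 : lowEquiv Γ l σ₁ σ₂)
    (h3 : Step keyReg (Prog.single c) σ₁ c₁' σ₁')
    (h4 : Step keyReg (Prog.single c) σ₂ c₂' σ₂') :
    lowEquiv Γ l σ₁' σ₂' ∧ t σ₁ = t σ₂ := by
  obtain ⟨r₁, hr₁, b₁, rfl⟩ := h3.single_eq_updSt_cipher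
  obtain ⟨r₂, hr₂, b₂, rfl⟩ := h4.single_eq_updSt_cipher
  obtain rfl := Option.mem_unique hr₁ hr₂
  exact ⟨h2.updSt_cipher r₁ b₁ b₂, ht σ₁ σ₂ h2⟩

theorem single_step_security {Reg : Type} [DecidableEq Reg] (keyReg : Reg)
    (Γ : Reg → Label) (l : Label) (t : St Reg → ℕ)
    (hkey : Γ keyReg = Label.priv)
    (hpub : ∀ r, r ≠ keyReg → Γ r = Label.public')
    (ht : ∀ σ σ', lowEquiv Γ l σ σ' → t σ = t σ')
    (c : Cmd Reg) (ℓ : Label) (σ₁ σ₂ σ₁' σ₂' : St Reg) (c₁' c₂' : Prog Reg)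
    (h1 : HasType Γ (Prog.single c) ℓ)
    (h2 : lowEquiv Γ l σ₁ σ₂)
    (h3 : Step keyReg (Prog.single c) σ₁ c₁' σ₁')
    (h4 : Step keyReg (Prog.single c) σ₂ c₂' σ₂') :
    lowEquiv Γ l σ₁' σ₂' ∧ t σ₁ = t σ₂ :=
  single_step_security_general keyReg Γ l t ht c σ₁ σ₂ σ₁' σ₂' c₁' c₂' h2 h3 h4
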